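/- Let K ⊆ ℝ^n be a closed convex cone, L ⊆ ℝ^n a linear subspace, and c ∈ ℝ^n. Then the feasibility problem (K, L, c) is strongly infeasible (i.e., K ∩ (L + c) = ∅ and dist(K, L + c) > 0) if and only if there exists w ∈ K* ∩ L^⊥ with w^T c = −1. -/

import Mathlib

open scoped RealInnerProductSpace

/-- The distance between two sets. -/
noncomputable def setDist {V : Type*} [NormedAddCommGroup V] (A B : Set V) : ℝ :=
  sInf (Set.image2 dist A B)

/-!
If `⟪w, ·⟫` is nonnegative on `K`, vanishes on `L` and equals `-1` at `c`, then it is `-1` on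
all of `L + c`, so `1 ≤ ⟪w, k - y⟫ ≤ ‖w‖ * dist k y` for `k ∈ K`, `y ∈ L + c`: the two sets are
at distance at least `‖w‖⁻¹`. Conversely, `dist(K, L + c) > 0` means that `c` lies outside the
closure of the convex cone `K + L`; Farkas' lemma separates `c` from that closed cone by some `y`
in its dual, which is orthogonal to `L` because the cone contains `L`, and rescaling `y` gives `w`.
-/

open scoped NNReal

section setDist

variable {V : Type*} [NormedAddCommGroup V] {A B : Set V}

lemma setDist_le_dist {a b : V} (ha : a ∈ A) (hb : b ∈ B) : setDist A B ≤ dist a b :=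
  csInf_le ⟨0, by rintro _ ⟨_, -, _, -, rfl⟩; exact dist_nonneg⟩
    (Set.mem_image2_of_mem ha hb)

lemma le_setDist {r : ℝ} (hA : A.Nonempty) (hB : B.Nonempty)
    (h : ∀ a ∈ A, ∀ b ∈ B, r ≤ dist a b) : r ≤ setDist A B :=
  le_csInf (hA.image2 hB) (by rintro _ ⟨a, ha, b, hb, rfl⟩; exact h a ha b hb)

lemma setDist_le_dist_add [Module ℝ V] {L : Submodule ℝ V} {c k l : V} (hk : k ∈ A)
    (hl : l ∈ L) :
    setDist A {x | x - c ∈ L} ≤ dist c (k + l) :=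
  calc setDist A {x | x - c ∈ L} ≤ dist k (c - l) := setDist_le_dist hk (by simpa using hl)
    _ = dist c (k + l) := by rw [dist_comm c, dist_eq_norm, dist_eq_norm]; congr 1; abel

end setDist

lemma notMem_closure_of_le_dist {V : Type*} [PseudoMetricSpace V] {S : Set V} {c : V} {d : ℝ}
    (hd : 0 < d) (h : ∀ x ∈ S, d ≤ dist c x) : c ∉ closure S := fun hc ↦ by
  obtain ⟨x, hx, hcx⟩ := Metric.mem_closure_iff.1 hc d hd
  exact (h x hx).not_gt hcx

section InnerProductSpace

variable {E : Type*} [NormedAddCommGroup E] [InnerProductSpace ℝ E]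

def PointedCone.ofConvex (K : Set E) (hconv : Convex ℝ K) (h0 : (0 : E) ∈ K)
    (hsmul : ∀ x ∈ K, ∀ t : ℝ, 0 ≤ t → t • x ∈ K) : PointedCone ℝ E where
  carrier := K
  zero_mem' := h0
  add_mem' {x y} hx hy := by
    have hmid : (1 / 2 : ℝ) • x + (1 / 2 : ℝ) • y ∈ K :=
      hconv hx hy (by norm_num) (by norm_num) (by norm_num)
    convert hsmul _ hmid 2 (by norm_num) using 1
    module
  smul_mem' t x hx := hsmul x hx t t.2

lemma Submodule.mem_orthogonal_of_inner_nonneg (L : Submodule ℝ E) {y : E}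
    (h : ∀ l ∈ L, 0 ≤ ⟪l, y⟫) : y ∈ Lᗮ := fun l hl ↦
  le_antisymm (by simpa [inner_neg_left] using h (-l) (L.neg_mem hl)) (h l hl)

lemma exists_inner_dual_of_notMem_closure_sup [CompleteSpace E] (P : PointedCone ℝ E)
    (L : Submodule ℝ E) {c : E} (hc : c ∉ closure (↑(P ⊔ L.restrictScalars ℝ≥0) : Set E)) :
    ∃ w, (∀ z ∈ P, 0 ≤ ⟪w, z⟫) ∧ w ∈ Lᗮ ∧ ⟪w, c⟫ = -1 := by
  obtain ⟨y, hy, hyc⟩ :=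
    ProperCone.hyperplane_separation' (Submodule.closure (P ⊔ L.restrictScalars ℝ≥0)) hc
  have hy' : ∀ x ∈ P ⊔ L.restrictScalars ℝ≥0, 0 ≤ ⟪x, y⟫ := fun x hx ↦
    hy x (subset_closure hx)
  refine ⟨(-⟪c, y⟫)⁻¹ • y, fun z hz ↦ ?_, ?_, ?_⟩
  · rw [real_inner_smul_left, real_inner_comm z y]
    exact mul_nonneg (inv_nonneg.2 (neg_nonneg.2 hyc.le))
      (hy' z (Submodule.mem_sup_left hz))
  · exact Lᗮ.smul_mem _ <| L.mem_orthogonal_of_inner_nonneg fun l hl ↦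
      hy' l (Submodule.mem_sup_right hl)
  · rw [real_inner_smul_left, real_inner_comm c y]
    field_simp [hyc.ne]

lemma one_le_norm_mul_dist {K : Set E} {L : Submodule ℝ E} {c w k y : E}
    (hwK : ∀ z ∈ K, 0 ≤ ⟪w, z⟫) (hwL : w ∈ Lᗮ) (hwc : ⟪w, c⟫ = -1) (hk : k ∈ K)
    (hy : y - c ∈ L) :
    1 ≤ ‖w‖ * dist k y := by
  have hwy : ⟪w, y⟫ = -1 := by
    have := Submodule.inner_left_of_mem_orthogonal hy hwL
    rw [inner_sub_right] at this
    linarith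
  calc 1 ≤ ⟪w, k - y⟫ := by rw [inner_sub_right, hwy]; linarith [hwK k hk]
    _ ≤ ‖w‖ * dist k y := by rw [dist_eq_norm]; exact real_inner_le_norm w _

end InnerProductSpace

theorem strongly_infeasible_iff_general {n : ℕ}
    (K : Set (EuclideanSpace ℝ (Fin n))) (L : Submodule ℝ (EuclideanSpace ℝ (Fin n)))
    (c : EuclideanSpace ℝ (Fin n))
    (hKconv : Convex ℝ K) (hK0 : (0 : EuclideanSpace ℝ (Fin n)) ∈ K)
    (hKcone : ∀ x ∈ K, ∀ t : ℝ, 0 ≤ t → t • x ∈ K) :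
    (K ∩ {x | x - c ∈ L} = ∅ ∧ 0 < setDist K {x | x - c ∈ L}) ↔
      ∃ w, (∀ z ∈ K, 0 ≤ ⟪w, z⟫) ∧ w ∈ Lᗮ ∧ ⟪w, c⟫ = (-1 : ℝ) := by
  constructor
  · rintro ⟨-, hd⟩
    let P := PointedCone.ofConvex K hKconv hK0 hKcone
    refine exists_inner_dual_of_notMem_closure_sup P L (notMem_closure_of_le_dist hd ?_)
    intro x hx
    obtain ⟨k, hk, l, hl, rfl⟩ := Submodule.mem_sup.1 hx
    exact setDist_le_dist_add hk ((L.restrictScalars_mem ℝ≥0 l).1 hl)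
  · rintro ⟨w, hwK, hwL, hwc⟩
    have key := fun k (hk : k ∈ K) y (hy : y - c ∈ L) ↦ one_le_norm_mul_dist hwK hwL hwc hk hy
    have hw : 0 < ‖w‖ := norm_pos_iff.2 (by rintro rfl; simp at hwc)
    refine ⟨Set.eq_empty_of_forall_notMem fun x ⟨hxK, hxL⟩ ↦
      absurd (key x hxK x hxL) (by simp), ?_⟩
    refine (inv_pos.2 hw).trans_le (le_setDist ⟨0, hK0⟩ ⟨c, by simp⟩ fun k hk y hy ↦ ?_)
    rw [inv_le_iff_one_le_mul₀ hw, mul_comm]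
    exact key k hk y hy

/-- **Characterization of strong infeasibility.**
Let `K ⊆ ℝ^n` be a closed convex cone, `L ⊆ ℝ^n` a linear subspace and `c ∈ ℝ^n`.  Then
`(K, L, c)` is strongly infeasible (i.e. `K ∩ (L + c) = ∅` and `dist(K, L + c) > 0`) if and
only if there exists `w ∈ K* ∩ L^⊥` with `wᵀc = -1`. -/
theorem strongly_infeasible_iff {n : ℕ}
    (K : Set (EuclideanSpace ℝ (Fin n))) (L : Submodule ℝ (EuclideanSpace ℝ (Fin n)))
    (c : EuclideanSpace ℝ (Fin n))
    (hKclosed : IsClosed K) (hKconv : Convex ℝ K) (hK0 : (0 : EuclideanSpace ℝ (Fin n)) ∈ K)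
    (hKcone : ∀ x ∈ K, ∀ t : ℝ, 0 ≤ t → t • x ∈ K) :
    (K ∩ {x | x - c ∈ L} = ∅ ∧ 0 < setDist K {x | x - c ∈ L}) ↔
      ∃ w, (∀ z ∈ K, 0 ≤ ⟪w, z⟫) ∧ w ∈ Lᗮ ∧ ⟪w, c⟫ = (-1 : ℝ) :=
  strongly_infeasible_iff_general K L c hKconv hK0 hKcone
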